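/- Let A be a d×d real symmetric positive semidefinite matrix with eigenvalues σ_1 ≤ σ_2 ≤ ⋯ ≤ σ_d and corresponding orthonormal eigenvectors u_1,…,u_d. Let p, q be real numbers with p² + q² = 1 and set v = p·u_1 + q·u_d. Then the smallest eigenvalue of A + vvᵀ equals min{ σ_2, (1 + σ_1 + σ_d − √((p² − q² + σ_1 − σ_d)² + 4p²q²))/2 }. In particular, if σ_d > σ_1 + p² − q², then the smallest eigenvalue of A + vvᵀ is at least min{σ_2, σ_1 + p² − |pq|}. -/

import Mathlib

/-!
Both sides are minima of Rayleigh quotients. In the coordinates `aᵢ = uᵢ ⬝ x` the quadratic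
form of `A + vvᵀ` is `∑ σᵢ aᵢ² + (p a₁ + q a_d)²`: every coordinate other than `a₁, a_d`
carries weight at least `σ₂`, while `(a₁, a_d)` sees the `2 × 2` matrix
`diag(σ₁, σ_d) + (p, q)(p, q)ᵀ`, whose smaller eigenvalue is the square-root expression.
Both values are attained: by `u₂` (orthogonal to `v`) and by the lift of a `2 × 2` eigenvector.
When `d = 2` we have `σ₂ = σ_d`, and the `2 × 2` eigenvalue already lies below it.
-/

open Matrix Finset

section SpectralSum

variable {ι n R : Type*} [Fintype ι] [Fintype n]

def spectralSum [Semiring R] (τ : ι → R) (w : ι → n → R) : Matrix n n R :=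
  ∑ i, τ i • vecMulVec (w i) (w i)

lemma dotProduct_vecMulVec_self_mulVec [CommSemiring R] (w x : n → R) :
    x ⬝ᵥ vecMulVec w w *ᵥ x = (w ⬝ᵥ x) ^ 2 := by
  rw [vecMulVec_mulVec, op_smul_eq_smul, dotProduct_smul, smul_eq_mul, dotProduct_comm, sq]

lemma dotProduct_spectralSum_mulVec [CommSemiring R] (τ : ι → R) (w : ι → n → R) (x : n → R) :
    x ⬝ᵥ spectralSum τ w *ᵥ x = ∑ i, τ i * (w i ⬝ᵥ x) ^ 2 := by
  simp only [spectralSum, sum_mulVec, dotProduct_sum, smul_mulVec, dotProduct_smul,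
    dotProduct_vecMulVec_self_mulVec, smul_eq_mul]

variable [DecidableEq n] [CommRing R] {w : n → n → R}

lemma sum_sq_dotProduct_of_orthonormal (hw : ∀ i j, w i ⬝ᵥ w j = if i = j then 1 else 0)
    (x : n → R) : ∑ i, (w i ⬝ᵥ x) ^ 2 = x ⬝ᵥ x := by
  have hW : of w * (of w)ᵀ = 1 := by
    ext i j
    simpa [mul_apply, one_apply, dotProduct] using hw i j
  calc ∑ i, (w i ⬝ᵥ x) ^ 2 = (of w *ᵥ x) ⬝ᵥ (of w *ᵥ x) := by simp only [sq, dotProduct]; rfl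
    _ = x ⬝ᵥ ((of w)ᵀ * of w) *ᵥ x := by
      rw [← mulVec_mulVec, dotProduct_mulVec x, vecMul_transpose]
    _ = x ⬝ᵥ x := by rw [mul_eq_one_comm.mp hW, one_mulVec]

lemma spectralSum_mulVec_of_orthonormal (hw : ∀ i j, w i ⬝ᵥ w j = if i = j then 1 else 0)
    (τ : n → R) (j : n) : spectralSum τ w *ᵥ w j = τ j • w j := by
  simp [spectralSum, sum_mulVec, smul_mulVec, vecMulVec_mulVec, hw]

end SpectralSum

section Rayleigh

variable {n : Type*} [Fintype n] [DecidableEq n] {τ : n → ℝ} {w : n → n → ℝ}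

lemma le_of_forall_mul_dotProduct_self_le (hw : ∀ i j, w i ⬝ᵥ w j = if i = j then 1 else 0)
    {m : ℝ} (hm : ∀ x, m * (x ⬝ᵥ x) ≤ x ⬝ᵥ spectralSum τ w *ᵥ x) (j : n) : m ≤ τ j := by
  simpa [spectralSum_mulVec_of_orthonormal hw, hw] using hm (w j)

lemma le_of_mul_dotProduct_self_le (hw : ∀ i j, w i ⬝ᵥ w j = if i = j then 1 else 0)
    {i₀ : n} (hmin : ∀ i, τ i₀ ≤ τ i) {x : n → ℝ} {μ : ℝ}
    (hx : 0 < x ⬝ᵥ x) (hμ : x ⬝ᵥ spectralSum τ w *ᵥ x ≤ μ * (x ⬝ᵥ x)) : τ i₀ ≤ μ := by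
  refine le_of_mul_le_mul_right (le_trans ?_ hμ) hx
  rw [dotProduct_spectralSum_mulVec, ← sum_sq_dotProduct_of_orthonormal hw, mul_sum]
  exact sum_le_sum fun i _ => mul_le_mul_of_nonneg_right (hmin i) (sq_nonneg _)

end Rayleigh

/-- The smaller eigenvalue of the symmetric matrix `!![a, b; b, c]`. -/
noncomputable def minEigenvalue₂ (a b c : ℝ) : ℝ := (a + c - √((a - c) ^ 2 + 4 * b ^ 2)) / 2

section MinEigenvalue₂

variable (a b c : ℝ)

lemma abs_sub_le_sqrt_sq_add : |a - c| ≤ √((a - c) ^ 2 + 4 * b ^ 2) := by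
  rw [← Real.sqrt_sq_eq_abs]
  exact Real.sqrt_le_sqrt (le_add_of_nonneg_right (by positivity))

lemma minEigenvalue₂_le_left : minEigenvalue₂ a b c ≤ a := by
  have := (abs_le.mp (abs_sub_le_sqrt_sq_add a b c)).1
  unfold minEigenvalue₂
  linarith

lemma minEigenvalue₂_le_right : minEigenvalue₂ a b c ≤ c := by
  have := (abs_le.mp (abs_sub_le_sqrt_sq_add a b c)).2
  unfold minEigenvalue₂
  linarith

lemma sub_minEigenvalue₂_mul_sub_minEigenvalue₂ :
    (a - minEigenvalue₂ a b c) * (c - minEigenvalue₂ a b c) = b ^ 2 := by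
  have := Real.sq_sqrt (by positivity : 0 ≤ (a - c) ^ 2 + 4 * b ^ 2)
  unfold minEigenvalue₂
  linear_combination this / 4

lemma minEigenvalue₂_mul_le (α β : ℝ) :
    minEigenvalue₂ a b c * (α ^ 2 + β ^ 2) ≤ a * α ^ 2 + 2 * b * (α * β) + c * β ^ 2 := by
  have hs := sub_nonneg.mpr (minEigenvalue₂_le_left a b c)
  have ht := sub_nonneg.mpr (minEigenvalue₂_le_right a b c)
  have hst := sub_minEigenvalue₂_mul_sub_minEigenvalue₂ a b c
  set s := a - minEigenvalue₂ a b c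
  rcases hs.eq_or_lt with hs₀ | hs₀
  · obtain rfl : b = 0 := by nlinarith
    nlinarith [mul_nonneg ht (sq_nonneg β)]
  · -- `s (sα² + 2bαβ + tβ²) = (sα + bβ)² + (st - b²)β²` with `t = c - minEigenvalue₂ a b c`
    nlinarith [sq_nonneg (s * α + b * β)]

lemma exists_eq_minEigenvalue₂_mul : ∃ α β : ℝ, 0 < α ^ 2 + β ^ 2 ∧
    a * α ^ 2 + 2 * b * (α * β) + c * β ^ 2 = minEigenvalue₂ a b c * (α ^ 2 + β ^ 2) := by
  have hst := sub_minEigenvalue₂_mul_sub_minEigenvalue₂ a b c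
  set s := a - minEigenvalue₂ a b c
  rcases eq_or_ne s 0 with hs | hs
  · exact ⟨1, 0, by norm_num, by linear_combination hs⟩
  · exact ⟨b, -s, add_pos_of_nonneg_of_pos (sq_nonneg b) (sq_pos_of_ne_zero (neg_ne_zero.mpr hs)),
      by linear_combination s * hst⟩

lemma sub_abs_le_minEigenvalue₂ (h : a ≤ c) : a - |b| ≤ minEigenvalue₂ a b c := by
  have key : √((a - c) ^ 2 + 4 * b ^ 2) ≤ c - a + 2 * |b| := by
    rw [Real.sqrt_le_left (by positivity)]
    nlinarith [sq_abs b, mul_nonneg (abs_nonneg b) (sub_nonneg.mpr h)]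
  unfold minEigenvalue₂
  linarith

variable {p q : ℝ}

lemma minEigenvalue₂_diag_add_rankOne (hpq : p ^ 2 + q ^ 2 = 1) (s t : ℝ) :
    minEigenvalue₂ (s + p ^ 2) (p * q) (t + q ^ 2)
      = (1 + s + t - √((p ^ 2 - q ^ 2 + s - t) ^ 2 + 4 * p ^ 2 * q ^ 2)) / 2 := by
  have h₁ : s + p ^ 2 + (t + q ^ 2) = 1 + s + t := by linear_combination hpq
  have h₂ : (s + p ^ 2 - (t + q ^ 2)) ^ 2 + 4 * (p * q) ^ 2
      = (p ^ 2 - q ^ 2 + s - t) ^ 2 + 4 * p ^ 2 * q ^ 2 := by ring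
  rw [minEigenvalue₂, h₁, h₂]

lemma minEigenvalue₂_diag_add_rankOne_le (hpq : p ^ 2 + q ^ 2 = 1) {s t : ℝ} (hst : s ≤ t) :
    minEigenvalue₂ (s + p ^ 2) (p * q) (t + q ^ 2) ≤ t := by
  -- test vector `(q, -p)`, orthogonal to `(p, q)`
  have := minEigenvalue₂_mul_le (s + p ^ 2) (p * q) (t + q ^ 2) q (-p)
  nlinarith [mul_nonneg (sq_nonneg q) (sub_nonneg.mpr hst)]

end MinEigenvalue₂

section RankOneUpdate

variable {n : Type*} [Fintype n] {σ : n → ℝ} {u : n → n → ℝ} {p q : ℝ} {i₀ iₑ : n} {v : n → ℝ}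

lemma dotProduct_spectralSum_add_vecMulVec_mulVec (hv : v = p • u i₀ + q • u iₑ) (x : n → ℝ) :
    x ⬝ᵥ (spectralSum σ u + vecMulVec v v) *ᵥ x
      = ∑ i, σ i * (u i ⬝ᵥ x) ^ 2 + (p * (u i₀ ⬝ᵥ x) + q * (u iₑ ⬝ᵥ x)) ^ 2 := by
  rw [add_mulVec, dotProduct_add, dotProduct_spectralSum_mulVec, dotProduct_vecMulVec_self_mulVec,
    hv, add_dotProduct, smul_dotProduct, smul_dotProduct, smul_eq_mul, smul_eq_mul]

variable [DecidableEq n]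

lemma mul_sum_sq_le_of_le_minEigenvalue₂ (a : n → ℝ) (hne : i₀ ≠ iₑ) {m : ℝ}
    (hm : m ≤ minEigenvalue₂ (σ i₀ + p ^ 2) (p * q) (σ iₑ + q ^ 2))
    (hrest : ∀ i, i ≠ i₀ → i ≠ iₑ → m ≤ σ i) :
    m * ∑ i, a i ^ 2 ≤ ∑ i, σ i * a i ^ 2 + (p * a i₀ + q * a iₑ) ^ 2 := by
  have hpair : (σ i₀ - m) * a i₀ ^ 2 + (σ iₑ - m) * a iₑ ^ 2 ≤ ∑ i, (σ i - m) * a i ^ 2 := by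
    rw [← sum_pair (f := fun i => (σ i - m) * a i ^ 2) hne]
    refine sum_le_sum_of_subset_of_nonneg (subset_univ _) fun i _ hi => ?_
    simp only [mem_insert, mem_singleton, not_or] at hi
    exact mul_nonneg (sub_nonneg.mpr (hrest i hi.1 hi.2)) (sq_nonneg _)
  simp only [sub_mul, sum_sub_distrib, ← mul_sum] at hpair
  have h₂ := minEigenvalue₂_mul_le (σ i₀ + p ^ 2) (p * q) (σ iₑ + q ^ 2) (a i₀) (a iₑ)
  have h₃ := mul_le_mul_of_nonneg_right hm (by positivity : 0 ≤ a i₀ ^ 2 + a iₑ ^ 2)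
  linarith

lemma mul_dotProduct_self_le_spectralSum_add_vecMulVec
    (hu : ∀ i j, u i ⬝ᵥ u j = if i = j then 1 else 0) (hv : v = p • u i₀ + q • u iₑ)
    (hne : i₀ ≠ iₑ) {m : ℝ} (hm : m ≤ minEigenvalue₂ (σ i₀ + p ^ 2) (p * q) (σ iₑ + q ^ 2))
    (hrest : ∀ i, i ≠ i₀ → i ≠ iₑ → m ≤ σ i) (x : n → ℝ) :
    m * (x ⬝ᵥ x) ≤ x ⬝ᵥ (spectralSum σ u + vecMulVec v v) *ᵥ x := by
  rw [dotProduct_spectralSum_add_vecMulVec_mulVec hv, ← sum_sq_dotProduct_of_orthonormal hu]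
  exact mul_sum_sq_le_of_le_minEigenvalue₂ _ hne hm hrest

lemma exists_dotProduct_spectralSum_add_vecMulVec_mulVec_eq
    (hu : ∀ i j, u i ⬝ᵥ u j = if i = j then 1 else 0) (hv : v = p • u i₀ + q • u iₑ)
    (hne : i₀ ≠ iₑ) :
    ∃ x, 0 < x ⬝ᵥ x ∧ x ⬝ᵥ (spectralSum σ u + vecMulVec v v) *ᵥ x
      = minEigenvalue₂ (σ i₀ + p ^ 2) (p * q) (σ iₑ + q ^ 2) * (x ⬝ᵥ x) := by
  obtain ⟨α, β, hpos, heq⟩ := exists_eq_minEigenvalue₂_mul (σ i₀ + p ^ 2) (p * q) (σ iₑ + q ^ 2)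
  have hxx : (α • u i₀ + β • u iₑ) ⬝ᵥ (α • u i₀ + β • u iₑ) = α ^ 2 + β ^ 2 := by
    simp [dotProduct_add, add_dotProduct, hu, hne, hne.symm]; ring
  refine ⟨α • u i₀ + β • u iₑ, hxx ▸ hpos, ?_⟩
  rw [dotProduct_spectralSum_add_vecMulVec_mulVec hv, hxx, ← heq]
  rw [Fintype.sum_eq_add i₀ iₑ hne]
  · simp [dotProduct_add, hu, hne, hne.symm]; ring
  · intro i hi
    simp [dotProduct_add, hu, hi.1, hi.2]

lemma dotProduct_spectralSum_add_vecMulVec_mulVec_self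
    (hu : ∀ i j, u i ⬝ᵥ u j = if i = j then 1 else 0) (hv : v = p • u i₀ + q • u iₑ)
    {j : n} (hj₀ : j ≠ i₀) (hjₑ : j ≠ iₑ) :
    u j ⬝ᵥ (spectralSum σ u + vecMulVec v v) *ᵥ u j = σ j := by
  rw [dotProduct_spectralSum_add_vecMulVec_mulVec hv]
  simp [hu, hj₀.symm, hjₑ.symm]

end RankOneUpdate

/-- Smallest eigenvalue of a rank-one update along the extreme eigenvectors:
with eigenvalues in nondecreasing order and `v = p u₁ + q u_d` (`p² + q² = 1`),
the smallest eigenvalue of `A + vvᵀ` equals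
`min (σ 1) ((1 + σ 0 + σ (d-1) - √((p² - q² + σ 0 - σ (d-1))² + 4p²q²))/2)`
(0-based indices); in particular if `σ (d-1) > σ 0 + p² - q²` it is at least
`min (σ 1) (σ 0 + p² - |pq|)`. -/
theorem stmt14 (d : ℕ) (hd : 2 ≤ d)
    (A : Matrix (Fin d) (Fin d) ℝ)
    (σ : Fin d → ℝ) (u : Fin d → Fin d → ℝ)
    (horth : ∀ i j, u i ⬝ᵥ u j = if i = j then (1 : ℝ) else 0)
    (hincr : ∀ i j : Fin d, i ≤ j → σ i ≤ σ j)
    (hA : A = ∑ i, σ i • vecMulVec (u i) (u i))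
    (p q : ℝ) (hpq : p ^ 2 + q ^ 2 = 1)
    (v : Fin d → ℝ)
    (hv : v = p • u ⟨0, by omega⟩ + q • u ⟨d - 1, by omega⟩)
    (σ' : Fin d → ℝ) (u' : Fin d → Fin d → ℝ)
    (horth' : ∀ i j, u' i ⬝ᵥ u' j = if i = j then (1 : ℝ) else 0)
    (hincr' : ∀ i j : Fin d, i ≤ j → σ' i ≤ σ' j)
    (hA' : A + vecMulVec v v = ∑ i, σ' i • vecMulVec (u' i) (u' i)) :
    σ' ⟨0, by omega⟩
      = min (σ ⟨1, by omega⟩)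
          ((1 + σ ⟨0, by omega⟩ + σ ⟨d - 1, by omega⟩
            - Real.sqrt ((p ^ 2 - q ^ 2 + σ ⟨0, by omega⟩ - σ ⟨d - 1, by omega⟩) ^ 2
                + 4 * p ^ 2 * q ^ 2)) / 2) ∧
    (σ ⟨d - 1, by omega⟩ > σ ⟨0, by omega⟩ + p ^ 2 - q ^ 2 →
      min (σ ⟨1, by omega⟩) (σ ⟨0, by omega⟩ + p ^ 2 - |p * q|) ≤ σ' ⟨0, by omega⟩) := by
  set i₀ : Fin d := ⟨0, by omega⟩
  set i₁ : Fin d := ⟨1, by omega⟩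
  set iₑ : Fin d := ⟨d - 1, by omega⟩
  have hne : i₀ ≠ iₑ := Fin.ne_of_val_ne (by simp [i₀, iₑ]; omega)
  have hi₀ : ∀ i, i₀ ≤ i := fun i => Nat.zero_le _
  have hi₁ : ∀ i, i ≠ i₀ → i₁ ≤ i := fun i hi => Nat.one_le_iff_ne_zero.mpr fun h => hi (Fin.ext h)
  rw [← minEigenvalue₂_diag_add_rankOne hpq]
  set μ := minEigenvalue₂ (σ i₀ + p ^ 2) (p * q) (σ iₑ + q ^ 2)
  have hM : spectralSum σ u + vecMulVec v v = spectralSum σ' u' := by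
    rw [spectralSum, spectralSum, ← hA, hA']
  have hmin' : ∀ i, σ' i₀ ≤ σ' i := fun i => hincr' _ _ (hi₀ i)
  have hleμ : σ' i₀ ≤ μ := by
    obtain ⟨x, hx, hQ⟩ := exists_dotProduct_spectralSum_add_vecMulVec_mulVec_eq horth hv hne
    exact le_of_mul_dotProduct_self_le horth' hmin' hx (hM ▸ hQ.le)
  have hleσ₁ : σ' i₀ ≤ σ i₁ := by
    rcases eq_or_ne i₁ iₑ with h | h
    · exact h ▸ hleμ.trans (minEigenvalue₂_diag_add_rankOne_le hpq (hincr _ _ (hi₀ _)))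
    · have hne₁ : i₁ ≠ i₀ := fun h => one_ne_zero (congrArg Fin.val h)
      have hu₁ : u i₁ ⬝ᵥ u i₁ = 1 := by simp [horth]
      refine le_of_mul_dotProduct_self_le horth' hmin' (hu₁ ▸ one_pos) ?_
      rw [← hM, dotProduct_spectralSum_add_vecMulVec_mulVec_self horth hv hne₁ h, hu₁, mul_one]
  have hge : min (σ i₁) μ ≤ σ' i₀ :=
    le_of_forall_mul_dotProduct_self_le horth' (fun x => hM ▸
      mul_dotProduct_self_le_spectralSum_add_vecMulVec horth hv hne (min_le_right _ _)
        (fun i h₀ _ => (min_le_left _ _).trans (hincr _ _ (hi₁ i h₀))) x) i₀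
  refine ⟨le_antisymm (le_min hleσ₁ hleμ) hge, fun h => ?_⟩
  exact (min_le_min_left _ (sub_abs_le_minEigenvalue₂ _ _ _ (by linarith))).trans hge
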